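/- arXiv:2402.02537 — 6 statements merged into one kernel-verified Lean document; each statement's English description precedes it below -/
import Mathlib

section
/- Define an operation *' on ℂ⁴ by y *' z := (z₁+y₁, e^{-y₁}z₂+y₂, e^{y₁}z₃+y₃, z₄+y₄+e^{y₁}y₂z₃). Then (ℂ⁴, *') is a group, and the map F(z₁,z₂,z₃,z₄) := (z₁, z₂, z₃, z₄-(1/2)z₂z₃) is a bijection of ℂ⁴ satisfying F(y *' z) = F(y) * F(z) for all y, z ∈ ℂ⁴; that is, F is a group isomorphism from (ℂ⁴, *') onto G = (ℂ⁴, *). -/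
/-- The multiplication `*` on `ℂ⁴`. -/
noncomputable def Gmul (y z : ℂ × ℂ × ℂ × ℂ) : ℂ × ℂ × ℂ × ℂ :=
  (z.1 + y.1,
   Complex.exp (-y.1) * z.2.1 + y.2.1,
   Complex.exp y.1 * z.2.2.1 + y.2.2.1,
   z.2.2.2 + y.2.2.2 + (1 / 2) * Complex.exp y.1 * y.2.1 * z.2.2.1
     - (1 / 2) * Complex.exp (-y.1) * y.2.2.1 * z.2.1)

/-- The multiplication `*'` on `ℂ⁴`:
`y *' z := (z₁+y₁, e^{-y₁}z₂+y₂, e^{y₁}z₃+y₃, z₄+y₄+e^{y₁}y₂z₃)`. -/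
noncomputable def Gmul' (y z : ℂ × ℂ × ℂ × ℂ) : ℂ × ℂ × ℂ × ℂ :=
  (z.1 + y.1,
   Complex.exp (-y.1) * z.2.1 + y.2.1,
   Complex.exp y.1 * z.2.2.1 + y.2.2.1,
   z.2.2.2 + y.2.2.2 + Complex.exp y.1 * y.2.1 * z.2.2.1)

/-- `F(z₁,z₂,z₃,z₄) := (z₁, z₂, z₃, z₄ - (1/2) z₂ z₃)`. -/
noncomputable def Fmap (z : ℂ × ℂ × ℂ × ℂ) : ℂ × ℂ × ℂ × ℂ :=
  (z.1, z.2.1, z.2.2.1, z.2.2.2 - (1 / 2) * z.2.1 * z.2.2.1)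

/-- `(ℂ⁴, *')` is a group, and `F` is a bijection of `ℂ⁴` with
`F(y *' z) = F(y) * F(z)`; that is, `F` is a group isomorphism from `(ℂ⁴, *')` onto
`G = (ℂ⁴, *)`. -/
theorem stmt1 :
    (∀ x y z : ℂ × ℂ × ℂ × ℂ, Gmul' (Gmul' x y) z = Gmul' x (Gmul' y z)) ∧
    (∀ z : ℂ × ℂ × ℂ × ℂ, Gmul' ((0 : ℂ), (0 : ℂ), (0 : ℂ), (0 : ℂ)) z = z ∧
      Gmul' z ((0 : ℂ), (0 : ℂ), (0 : ℂ), (0 : ℂ)) = z) ∧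
    (∀ z : ℂ × ℂ × ℂ × ℂ, ∃ w : ℂ × ℂ × ℂ × ℂ,
      Gmul' w z = ((0 : ℂ), (0 : ℂ), (0 : ℂ), (0 : ℂ)) ∧
      Gmul' z w = ((0 : ℂ), (0 : ℂ), (0 : ℂ), (0 : ℂ))) ∧
    Function.Bijective Fmap ∧
    (∀ y z : ℂ × ℂ × ℂ × ℂ, Fmap (Gmul' y z) = Gmul (Fmap y) (Fmap z)) := by
  refine ⟨?_, ?_, ?_, ?_, ?_⟩
  · intro x y z
    simp only [Gmul', Prod.ext_iff, Complex.exp_add, Complex.exp_neg, neg_add]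
    refine ⟨by ring, ?_, by ring, ?_⟩ <;>
    · field_simp
      ring
  · intro z
    simp [Gmul', Prod.ext_iff]
  · intro z
    refine ⟨(-z.1, -Complex.exp z.1 * z.2.1, -Complex.exp (-z.1) * z.2.2.1,
      z.2.1 * z.2.2.1 - z.2.2.2), ?_, ?_⟩ <;>
    · simp only [Gmul', Prod.ext_iff, Complex.exp_neg, neg_neg]
      refine ⟨by ring, ?_, ?_, ?_⟩ <;>
      · field_simp
        try ring
  · refine Function.bijective_iff_has_inverse.mpr
      ⟨fun z => (z.1, z.2.1, z.2.2.1, z.2.2.2 + (1 / 2) * z.2.1 * z.2.2.1), ?_, ?_⟩ <;>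
    · intro z
      simp [Fmap, Prod.ext_iff]
      try ring
  · intro y z
    simp only [Fmap, Gmul, Gmul', Prod.ext_iff, Complex.exp_neg]
    refine ⟨trivial, trivial, trivial, ?_⟩
    field_simp
    ring
end

section
/- The set Γ_π is a subgroup of the group G = (ℂ⁴, *): it contains the identity (0,0,0,0), it is closed under the operation *, and it is closed under taking inverses in G. -/
/-- Inversion in `G = (ℂ⁴, *)`. -/
noncomputable def Ginv (z : ℂ × ℂ × ℂ × ℂ) : ℂ × ℂ × ℂ × ℂ :=
  (-z.1, -(Complex.exp z.1 * z.2.1), -(Complex.exp (-z.1) * z.2.2.1), -z.2.2.2)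

/-- The set `Γ_μ ⊆ ℂ⁴` of points `(λa+iμb, (Pm)₁, (Pm)₂, (1/2)det(P)(h+ik))` with
`a,b,h,k ∈ ℤ` and `m = m₁ + i m₂`, `m₁, m₂ ∈ ℤ²`; `P` acts ℂ-linearly on `ℂ²`. -/
noncomputable def Gamma (P : Matrix (Fin 2) (Fin 2) ℝ) (lam μ : ℝ) :
    Set (ℂ × ℂ × ℂ × ℂ) :=
  { z | ∃ (a b h k : ℤ) (m₁ m₂ : Fin 2 → ℤ),
      z = (((lam * a : ℝ) : ℂ) + ((μ * b : ℝ) : ℂ) * Complex.I,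
           (P.map (Complex.ofReal)).mulVec (fun j => (m₁ j : ℂ) + (m₂ j : ℂ) * Complex.I) 0,
           (P.map (Complex.ofReal)).mulVec (fun j => (m₁ j : ℂ) + (m₂ j : ℂ) * Complex.I) 1,
           (1 / 2 : ℂ) * ((P.det : ℝ) : ℂ) * ((h : ℂ) + (k : ℂ) * Complex.I)) }

open Matrix GaussianInt
open Complex (I exp ofReal ofRealHom)

noncomputable def expDiag (t : ℂ) : Matrix (Fin 2) (Fin 2) ℂ :=
  diagonal ![exp (-t), exp t]

lemma expDiag_zero : expDiag 0 = 1 := by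
  rw [expDiag, ← diagonal_one]
  congr 1
  ext i; fin_cases i <;> simp

lemma expDiag_add (s t : ℂ) : expDiag (s + t) = expDiag s * expDiag t := by
  rw [expDiag, expDiag, expDiag, diagonal_mul_diagonal]
  congr 1
  ext i; fin_cases i <;> simp [Complex.exp_add, mul_comm]

lemma expDiag_pi_mul_I : expDiag (Real.pi * I) = -1 := by
  rw [expDiag, ← diagonal_one, diagonal_neg]
  congr 1
  ext i; fin_cases i <;> simp [Complex.exp_neg, Complex.exp_pi_mul_I]

lemma expDiag_ofReal (r : ℝ) :
    expDiag r = (diagonal ![Real.exp (-r), Real.exp r]).map ofReal := by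
  rw [expDiag, diagonal_map (by simp)]
  congr 1
  ext i; fin_cases i <;> simp [Complex.ofReal_exp]

lemma expDiag_mulVec_zero (t : ℂ) (w : Fin 2 → ℂ) : (expDiag t *ᵥ w) 0 = exp (-t) * w 0 :=
  mulVec_diagonal _ _ _

lemma expDiag_mulVec_one (t : ℂ) (w : Fin 2 → ℂ) : (expDiag t *ᵥ w) 1 = exp t * w 1 :=
  mulVec_diagonal _ _ _

lemma Gmul_mk (t t' c c' : ℂ) (w w' : Fin 2 → ℂ) :
    Gmul (t, w 0, w 1, c) (t', w' 0, w' 1, c') =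
      (t' + t, (expDiag t *ᵥ w' + w) 0, (expDiag t *ᵥ w' + w) 1,
        c' + c + 1 / 2 * (w 0 * (expDiag t *ᵥ w') 1 - w 1 * (expDiag t *ᵥ w') 0)) := by
  simp only [Gmul, Pi.add_apply, expDiag_mulVec_zero, expDiag_mulVec_one, Prod.mk.injEq, true_and]
  ring

lemma Ginv_mk (t c : ℂ) (w : Fin 2 → ℂ) :
    Ginv (t, w 0, w 1, c) = (-t, (-(expDiag (-t) *ᵥ w)) 0, (-(expDiag (-t) *ᵥ w)) 1, -c) := by
  simp only [Ginv, Pi.neg_apply, expDiag_mulVec_zero, expDiag_mulVec_one, neg_neg]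

lemma mulVec_cross_fin_two {R : Type*} [CommRing R] (M : Matrix (Fin 2) (Fin 2) R)
    (v w : Fin 2 → R) :
    (M *ᵥ v) 0 * (M *ᵥ w) 1 - (M *ᵥ v) 1 * (M *ᵥ w) 0 = M.det * (v 0 * w 1 - v 1 * w 0) := by
  simp only [mulVec, dotProduct, Fin.sum_univ_two, det_fin_two]
  ring

lemma mapMatrix_intCast_mulVec_comp {n R S : Type*} [Fintype n] [DecidableEq n]
    [CommRing R] [CommRing S] (f : R →+* S) (N : Matrix n n ℤ) (v : n → R) :
    (Int.castRingHom S).mapMatrix N *ᵥ (f ∘ v) = f ∘ ((Int.castRingHom R).mapMatrix N *ᵥ v) := by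
  ext i
  rw [Function.comp_apply, RingHom.map_mulVec]
  congr 2
  ext j k
  simp

def intertwiningExponents (P : Matrix (Fin 2) (Fin 2) ℂ) : AddSubgroup ℂ where
  carrier := {t | ∃ N : Matrix (Fin 2) (Fin 2) ℤ,
    N.det = 1 ∧ expDiag t * P = P * (Int.castRingHom ℂ).mapMatrix N}
  zero_mem' := ⟨1, det_one, by simp [expDiag_zero]⟩
  add_mem' := by
    rintro s t ⟨M, hMdet, hM⟩ ⟨N, hNdet, hN⟩
    refine ⟨M * N, by rw [det_mul, hMdet, hNdet, mul_one], ?_⟩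
    rw [expDiag_add, Matrix.mul_assoc, hN, ← Matrix.mul_assoc, hM, Matrix.mul_assoc, map_mul]
  neg_mem' := by
    rintro t ⟨N, hNdet, hN⟩
    have hNadj : N * adjugate N = 1 := by rw [mul_adjugate, hNdet, one_smul]
    refine ⟨adjugate N, by rw [det_adjugate, hNdet, one_pow], ?_⟩
    calc expDiag (-t) * P
        = expDiag (-t) * (P * (Int.castRingHom ℂ).mapMatrix (N * adjugate N)) := by
          rw [hNadj, map_one, Matrix.mul_one]
      _ = P * (Int.castRingHom ℂ).mapMatrix (adjugate N) := by
        rw [map_mul, ← Matrix.mul_assoc P, ← hN, ← Matrix.mul_assoc, ← Matrix.mul_assoc,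
          ← expDiag_add, neg_add_cancel, expDiag_zero, Matrix.one_mul]

lemma pi_mul_I_mem_intertwiningExponents (P : Matrix (Fin 2) (Fin 2) ℂ) :
    Real.pi * I ∈ intertwiningExponents P :=
  ⟨-1, by simp [det_fin_two], by
    rw [expDiag_pi_mul_I, map_neg, map_one, Matrix.mul_neg, Matrix.mul_one, Matrix.neg_mul,
      Matrix.one_mul]⟩

lemma ofReal_mem_intertwiningExponents {A : Matrix (Fin 2) (Fin 2) ℤ} (hA : A.det = 1) {lam : ℝ}
    {P : Matrix (Fin 2) (Fin 2) ℝ} (hP : IsUnit P.det)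
    (hconj : P * A.map (Int.cast : ℤ → ℝ) * P⁻¹ = diagonal ![Real.exp (-lam), Real.exp lam]) :
    (lam : ℂ) ∈ intertwiningExponents (P.map ofReal) := by
  have hPA : diagonal ![Real.exp (-lam), Real.exp lam] * P = P * A.map (Int.cast : ℤ → ℝ) := by
    rw [← hconj, Matrix.mul_assoc, nonsing_inv_mul _ hP, Matrix.mul_one]
  refine ⟨A, hA, ?_⟩
  have hPAc := congrArg ofRealHom.mapMatrix hPA
  have hAc : (Int.castRingHom ℂ).mapMatrix A = ofRealHom.mapMatrix (A.map Int.cast) := by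
    ext; simp
  rw [map_mul, map_mul] at hPAc
  rw [expDiag_ofReal, hAc]
  exact hPAc

lemma ofReal_add_mul_I_mem_intertwiningExponents {P : Matrix (Fin 2) (Fin 2) ℂ} {lam : ℝ}
    (hlam : (lam : ℂ) ∈ intertwiningExponents P) (a b : ℤ) :
    ((lam * a : ℝ) : ℂ) + ((Real.pi * b : ℝ) : ℂ) * I ∈ intertwiningExponents P := by
  convert add_mem (zsmul_mem hlam a) (zsmul_mem (pi_mul_I_mem_intertwiningExponents P) b) using 1
  push_cast
  simp only [zsmul_eq_mul]
  ring

lemma exists_expDiag_mulVec_eq {P : Matrix (Fin 2) (Fin 2) ℂ} {t : ℂ}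
    (ht : t ∈ intertwiningExponents P) (v : Fin 2 → GaussianInt) :
    ∃ u : Fin 2 → GaussianInt, expDiag t *ᵥ (P *ᵥ (toComplex ∘ v)) = P *ᵥ (toComplex ∘ u) := by
  obtain ⟨N, -, hN⟩ := ht
  refine ⟨(Int.castRingHom GaussianInt).mapMatrix N *ᵥ v, ?_⟩
  rw [mulVec_mulVec, hN, ← mulVec_mulVec, mapMatrix_intCast_mulVec_comp]

lemma mem_Gamma_iff {P : Matrix (Fin 2) (Fin 2) ℝ} {lam μ : ℝ} {z : ℂ × ℂ × ℂ × ℂ} :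
    z ∈ Gamma P lam μ ↔ ∃ (a b : ℤ) (v : Fin 2 → GaussianInt) (g : GaussianInt),
      z = (((lam * a : ℝ) : ℂ) + ((μ * b : ℝ) : ℂ) * I, (P.map ofReal *ᵥ (toComplex ∘ v)) 0,
        (P.map ofReal *ᵥ (toComplex ∘ v)) 1, 1 / 2 * (P.det : ℂ) * g) := by
  constructor
  · rintro ⟨a, b, h, k, m₁, m₂, rfl⟩
    refine ⟨a, b, fun j => ⟨m₁ j, m₂ j⟩, ⟨h, k⟩, ?_⟩
    simp only [Function.comp_def, toComplex_def']
  · rintro ⟨a, b, v, g, rfl⟩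
    refine ⟨a, b, g.re, g.im, fun j => (v j).re, fun j => (v j).im, ?_⟩
    simp only [Function.comp_def, toComplex_def]

lemma zero_mem_Gamma (P : Matrix (Fin 2) (Fin 2) ℝ) (lam μ : ℝ) :
    ((0 : ℂ), (0 : ℂ), (0 : ℂ), (0 : ℂ)) ∈ Gamma P lam μ :=
  ⟨0, 0, 0, 0, 0, 0, by simp⟩

section
variable {P : Matrix (Fin 2) (Fin 2) ℝ} {lam : ℝ}

lemma Gmul_mem_Gamma (hlam : (lam : ℂ) ∈ intertwiningExponents (P.map ofReal))
    {x y : ℂ × ℂ × ℂ × ℂ} (hx : x ∈ Gamma P lam Real.pi) (hy : y ∈ Gamma P lam Real.pi) :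
    Gmul x y ∈ Gamma P lam Real.pi := by
  rw [mem_Gamma_iff] at hx hy ⊢
  obtain ⟨a, b, v, g, rfl⟩ := hx
  obtain ⟨a', b', v', g', rfl⟩ := hy
  obtain ⟨u, hu⟩ :=
    exists_expDiag_mulVec_eq (ofReal_add_mul_I_mem_intertwiningExponents hlam a b) v'
  refine ⟨a' + a, b' + b, u + v, g' + g + (v 0 * u 1 - v 1 * u 0), ?_⟩
  have hdet : (P.map ofReal).det = P.det := (ofRealHom.map_det P).symm
  have hsum : toComplex ∘ (u + v) = toComplex ∘ u + toComplex ∘ v := by ext; simp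
  rw [Gmul_mk, hu, mulVec_cross_fin_two, hdet, hsum, mulVec_add]
  simp only [Prod.mk.injEq, Function.comp_apply, map_add, map_sub, map_mul, true_and]
  constructor
  · push_cast; ring
  · ring

lemma Ginv_mem_Gamma (hlam : (lam : ℂ) ∈ intertwiningExponents (P.map ofReal))
    {x : ℂ × ℂ × ℂ × ℂ} (hx : x ∈ Gamma P lam Real.pi) : Ginv x ∈ Gamma P lam Real.pi := by
  rw [mem_Gamma_iff] at hx ⊢
  obtain ⟨a, b, v, g, rfl⟩ := hx
  obtain ⟨u, hu⟩ :=
    exists_expDiag_mulVec_eq (neg_mem (ofReal_add_mul_I_mem_intertwiningExponents hlam a b)) v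
  refine ⟨-a, -b, -u, -g, ?_⟩
  have hneg : toComplex ∘ (-u) = -(toComplex ∘ u) := by ext; simp
  rw [Ginv_mk, hneg, mulVec_neg, ← hu, map_neg]
  simp only [Prod.mk.injEq, true_and]
  constructor
  · push_cast; ring
  · ring

end

theorem stmt3_general (A : Matrix (Fin 2) (Fin 2) ℤ) (hA : A.det = 1)
    (lam : ℝ)
    (P : Matrix (Fin 2) (Fin 2) ℝ) (hP : IsUnit P.det)
    (hconj : P * A.map (Int.cast : ℤ → ℝ) * P⁻¹ =
      Matrix.diagonal ![Real.exp (-lam), Real.exp lam]) :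
    (((0 : ℂ), (0 : ℂ), (0 : ℂ), (0 : ℂ)) ∈ Gamma P lam Real.pi) ∧
    (∀ x ∈ Gamma P lam Real.pi, ∀ y ∈ Gamma P lam Real.pi,
      Gmul x y ∈ Gamma P lam Real.pi) ∧
    (∀ x ∈ Gamma P lam Real.pi, Ginv x ∈ Gamma P lam Real.pi) := by
  have hlam := ofReal_mem_intertwiningExponents hA hP hconj
  exact ⟨zero_mem_Gamma P lam Real.pi, fun _ hx _ hy => Gmul_mem_Gamma hlam hx hy,
    fun _ hx => Ginv_mem_Gamma hlam hx⟩

/-- `Γ_π` is a subgroup of `G = (ℂ⁴, *)`: it contains the identity, it is closed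
under `*`, and it is closed under taking inverses in `G`. -/
theorem stmt3 (A : Matrix (Fin 2) (Fin 2) ℤ) (hA : A.det = 1)
    (lam : ℝ) (hlam : 0 < lam)
    (P : Matrix (Fin 2) (Fin 2) ℝ) (hP : IsUnit P.det)
    (hconj : P * A.map (Int.cast : ℤ → ℝ) * P⁻¹ =
      Matrix.diagonal ![Real.exp (-lam), Real.exp lam]) :
    (((0 : ℂ), (0 : ℂ), (0 : ℂ), (0 : ℂ)) ∈ Gamma P lam Real.pi) ∧
    (∀ x ∈ Gamma P lam Real.pi, ∀ y ∈ Gamma P lam Real.pi,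
      Gmul x y ∈ Gamma P lam Real.pi) ∧
    (∀ x ∈ Gamma P lam Real.pi, Ginv x ∈ Gamma P lam Real.pi) :=
  stmt3_general A hA lam P hP hconj
end

section
/- The coset space Γ_π\G, i.e. the quotient of G = (ℂ⁴, *) (with the standard topology of ℂ⁴) by the left multiplication action of the subgroup Γ_π, equipped with the quotient topology, is compact. Together with discreteness of Γ_π, this says Γ_π is a lattice (a discrete cocompact subgroup) of G. -/
/-- The "same left `Γ`-orbit" relation on `G = (ℂ⁴, *)`: `z ∼ w` iff `w = γ * z` for some
`γ ∈ Γ_π`.  The coset space `Γ_π\G` is the quotient of `ℂ⁴` by this relation, with the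
quotient topology. -/
def leftOrbitRel (P : Matrix (Fin 2) (Fin 2) ℝ) (lam : ℝ) (z w : ℂ × ℂ × ℂ × ℂ) : Prop :=
  ∃ γ ∈ Gamma P lam Real.pi, Gmul γ z = w

open Set Matrix

noncomputable section

theorem Quot.compactSpace_of_forall_exists_mem {X : Type*} [TopologicalSpace X]
    {r : X → X → Prop} {K : Set X} (hK : IsCompact K)
    (h : ∀ x, ∃ y ∈ K, Quot.mk r x = Quot.mk r y) : CompactSpace (Quot r) := by
  have hsurj : Quot.mk r '' K = univ := eq_univ_of_forall <| Quot.ind fun x => by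
    obtain ⟨y, hy, hxy⟩ := h x
    exact ⟨y, hy, hxy.symm⟩
  exact ⟨hsurj ▸ hK.image continuous_quot_mk⟩

theorem discreteTopology_of_forall_dist_lt {X : Type*} [PseudoMetricSpace X] {s : Set X} {ε : ℝ}
    (hε : 0 < ε) (h : ∀ x ∈ s, ∀ y ∈ s, dist x y < ε → x = y) : DiscreteTopology s :=
  .of_forall_le_dist hε fun x y hxy => not_lt.1 fun hlt => hxy (Subtype.ext (h x x.2 y y.2 hlt))

theorem Int.eq_of_abs_mul_sub_lt {c : ℝ} (hc : c ≠ 0) {a a' : ℤ} (h : |c * (a - a')| < |c|) :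
    a = a' := by
  rwa [abs_mul, mul_lt_iff_lt_one_right (abs_pos.2 hc), ← Int.cast_sub, ← Int.cast_abs,
    ← Int.cast_one, Int.cast_lt, Int.abs_lt_one_iff, sub_eq_zero] at h

theorem isUnit_det_map_ofReal {ι : Type*} [Fintype ι] [DecidableEq ι] {P : Matrix ι ι ℝ}
    (hP : IsUnit P.det) : IsUnit (P.map Complex.ofReal).det :=
  RingHom.map_det Complex.ofRealHom P ▸ hP.map _

def latticePoint (c d : ℝ) (a b : ℤ) : ℂ := ((c * a : ℝ) : ℂ) + ((d * b : ℝ) : ℂ) * Complex.I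

def latticeCell (c d : ℝ) : Set ℂ :=
  (fun t : ℝ × ℝ => ((c * t.1 : ℝ) : ℂ) + ((d * t.2 : ℝ) : ℂ) * Complex.I) '' Icc 0 1 ×ˢ Icc 0 1

theorem isCompact_latticeCell (c d : ℝ) : IsCompact (latticeCell c d) :=
  (isCompact_Icc.prod isCompact_Icc).image (by fun_prop)

theorem exists_add_latticePoint_mem_latticeCell {c d : ℝ} (hc : c ≠ 0) (hd : d ≠ 0) (z : ℂ) :
    ∃ a b : ℤ, z + latticePoint c d a b ∈ latticeCell c d := by
  refine ⟨-⌊z.re / c⌋, -⌊z.im / d⌋, (Int.fract (z.re / c), Int.fract (z.im / d)),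
    ⟨⟨Int.fract_nonneg _, (Int.fract_lt_one _).le⟩, ⟨Int.fract_nonneg _, (Int.fract_lt_one _).le⟩⟩,
    ?_⟩
  apply Complex.ext <;> simp [latticePoint, ← Int.self_sub_floor] <;> field_simp <;> ring

theorem eq_of_dist_latticePoint_lt {c d : ℝ} (hc : c ≠ 0) (hd : d ≠ 0) {a b a' b' : ℤ}
    (h : dist (latticePoint c d a b) (latticePoint c d a' b') < min |c| |d|) :
    a = a' ∧ b = b' := by
  rw [Complex.dist_eq] at h
  set w := latticePoint c d a b - latticePoint c d a' b'
  have hre : w.re = c * (a - a') := by simp [w, latticePoint]; ring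
  have him : w.im = d * (b - b') := by simp [w, latticePoint]; ring
  constructor
  · refine Int.eq_of_abs_mul_sub_lt hc ?_
    calc |c * (a - a')| = |w.re| := by rw [hre]
      _ ≤ ‖w‖ := Complex.abs_re_le_norm w
      _ < |c| := h.trans_le (min_le_left _ _)
  · refine Int.eq_of_abs_mul_sub_lt hd ?_
    calc |d * (b - b')| = |w.im| := by rw [him]
      _ ≤ ‖w‖ := Complex.abs_im_le_norm w
      _ < |d| := h.trans_le (min_le_right _ _)

section MulVec

variable {ι : Type*}

def gaussVec (m₁ m₂ : ι → ℤ) : ι → ℂ := fun j => (m₁ j : ℂ) + (m₂ j : ℂ) * Complex.I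

theorem gaussVec_apply (m₁ m₂ : ι → ℤ) (j : ι) :
    gaussVec m₁ m₂ j = latticePoint 1 1 (m₁ j) (m₂ j) := by
  simp [gaussVec, latticePoint]

variable [Fintype ι]

def mulVecCell (M : Matrix ι ι ℂ) : Set (ι → ℂ) :=
  (M *ᵥ ·) '' univ.pi fun _ => latticeCell 1 1

theorem isCompact_mulVecCell (M : Matrix ι ι ℂ) : IsCompact (mulVecCell M) :=
  (isCompact_univ_pi fun _ => isCompact_latticeCell 1 1).image
    (continuous_const.matrix_mulVec continuous_id)

variable [DecidableEq ι]

theorem exists_add_mulVec_gaussVec_mem_mulVecCell {M : Matrix ι ι ℂ} (hM : IsUnit M.det)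
    (v : ι → ℂ) : ∃ m₁ m₂ : ι → ℤ, v + M *ᵥ gaussVec m₁ m₂ ∈ mulVecCell M := by
  choose m₁ m₂ hm using fun j =>
    exists_add_latticePoint_mem_latticeCell one_ne_zero one_ne_zero ((M⁻¹ *ᵥ v) j)
  refine ⟨m₁, m₂, M⁻¹ *ᵥ v + gaussVec m₁ m₂, fun j _ => by simpa [gaussVec_apply] using hm j, ?_⟩
  show M *ᵥ (M⁻¹ *ᵥ v + _) = _
  rw [mulVec_add, mulVec_mulVec, mul_nonsing_inv M hM, one_mulVec]

theorem exists_forall_dist_mulVec_gaussVec_lt {M : Matrix ι ι ℂ} (hM : IsUnit M.det) :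
    ∃ ε > 0, ∀ m₁ m₂ m₁' m₂' : ι → ℤ,
      dist (M *ᵥ gaussVec m₁ m₂) (M *ᵥ gaussVec m₁' m₂') < ε → m₁ = m₁' ∧ m₂ = m₂' := by
  -- continuity of `M⁻¹` at `0`: images closer than `ε` come from Gaussian vectors closer than `1`
  obtain ⟨ε, hε, hinv⟩ :=
    Metric.continuous_iff.1 ((continuous_const (y := M⁻¹)).matrix_mulVec continuous_id) 0 1 one_pos
  refine ⟨ε, hε, fun m₁ m₂ m₁' m₂' h => ?_⟩
  have hlt : dist (gaussVec m₁ m₂) (gaussVec m₁' m₂') < 1 := by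
    have := hinv (M *ᵥ gaussVec m₁ m₂ - M *ᵥ gaussVec m₁' m₂')
      (by rwa [dist_zero_right, ← dist_eq_norm])
    rwa [id_eq, id_eq, mulVec_zero, dist_zero_right, ← mulVec_sub, mulVec_mulVec,
      nonsing_inv_mul M hM, one_mulVec, ← dist_eq_norm] at this
  have hj (j : ι) : m₁ j = m₁' j ∧ m₂ j = m₂' j := by
    refine eq_of_dist_latticePoint_lt one_ne_zero one_ne_zero ?_
    simpa [gaussVec_apply] using (dist_le_pi_dist _ _ j).trans_lt hlt
  exact ⟨funext fun j => (hj j).1, funext fun j => (hj j).2⟩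

end MulVec

section Gamma

variable {P : Matrix (Fin 2) (Fin 2) ℝ} {lam μ : ℝ}

theorem mem_Gamma_iff_s5 {z : ℂ × ℂ × ℂ × ℂ} :
    z ∈ Gamma P lam μ ↔ (∃ a b : ℤ, z.1 = latticePoint lam μ a b) ∧
      (∃ m₁ m₂ : Fin 2 → ℤ, ![z.2.1, z.2.2.1] = P.map Complex.ofReal *ᵥ gaussVec m₁ m₂) ∧
      ∃ h k : ℤ, z.2.2.2 = latticePoint (P.det / 2) (P.det / 2) h k := by
  have hcentre (h k : ℤ) : (1 / 2 : ℂ) * ((P.det : ℝ) : ℂ) * ((h : ℂ) + (k : ℂ) * Complex.I) =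
      latticePoint (P.det / 2) (P.det / 2) h k := by
    simp [latticePoint]; ring
  constructor
  · rintro ⟨a, b, h, k, m₁, m₂, rfl⟩
    exact ⟨⟨a, b, rfl⟩, ⟨m₁, m₂, by ext j; fin_cases j <;> rfl⟩, ⟨h, k, hcentre h k⟩⟩
  · rintro ⟨⟨a, b, h1⟩, ⟨m₁, m₂, h23⟩, ⟨h, k, h4⟩⟩
    exact ⟨a, b, h, k, m₁, m₂, Prod.ext h1 <| Prod.ext (congrFun h23 0) <|
      Prod.ext (congrFun h23 1) (h4.trans (hcentre h k).symm)⟩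

theorem discreteTopology_Gamma (hlam : lam ≠ 0) (hμ : μ ≠ 0) (hP : IsUnit P.det) :
    DiscreteTopology (Gamma P lam μ) := by
  have hd : P.det / 2 ≠ 0 := div_ne_zero hP.ne_zero two_ne_zero
  obtain ⟨ε, hε, hsep⟩ := exists_forall_dist_mulVec_gaussVec_lt (isUnit_det_map_ofReal hP)
  set δ := min (min |lam| |μ|) (min ε |P.det / 2|)
  have hδ : 0 < δ := by
    simp only [δ, lt_min_iff, abs_pos]; exact ⟨⟨hlam, hμ⟩, hε, hd⟩
  refine discreteTopology_of_forall_dist_lt hδ fun x hx y hy hxy => ?_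
  obtain ⟨⟨a, b, hx1⟩, ⟨m₁, m₂, hx23⟩, h, k, hx4⟩ := mem_Gamma_iff_s5.1 hx
  obtain ⟨⟨a', b', hy1⟩, ⟨m₁', m₂', hy23⟩, h', k', hy4⟩ := mem_Gamma_iff_s5.1 hy
  simp only [Prod.dist_eq, max_lt_iff] at hxy
  obtain ⟨d1, d2, d3, d4⟩ := hxy
  have h1 : dist x.1 y.1 < min |lam| |μ| := d1.trans_le (min_le_left _ _)
  have h23 : dist ![x.2.1, x.2.2.1] ![y.2.1, y.2.2.1] < ε := by
    rw [dist_pi_lt_iff hε, Fin.forall_fin_two]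
    exact ⟨d2.trans_le ((min_le_right _ _).trans (min_le_left _ _)),
      d3.trans_le ((min_le_right _ _).trans (min_le_left _ _))⟩
  have h4 : dist x.2.2.2 y.2.2.2 < min |P.det / 2| |P.det / 2| := by
    rw [min_self]; exact d4.trans_le ((min_le_right _ _).trans (min_le_right _ _))
  rw [hx1, hy1] at h1
  rw [hx23, hy23] at h23
  rw [hx4, hy4] at h4
  obtain ⟨rfl, rfl⟩ := eq_of_dist_latticePoint_lt hlam hμ h1
  obtain ⟨rfl, rfl⟩ := hsep _ _ _ _ h23
  obtain ⟨rfl, rfl⟩ := eq_of_dist_latticePoint_lt hd hd h4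
  rw [← hy23] at hx23
  exact Prod.ext (hx1.trans hy1.symm) <| Prod.ext (congrFun hx23 0) <|
    Prod.ext (congrFun hx23 1) (hx4.trans hy4.symm)

theorem Gmul_zero_mk_zero (v w : ℂ) (z : ℂ × ℂ × ℂ × ℂ) :
    Gmul (0, v, w, 0) z =
      (z.1, z.2.1 + v, z.2.2.1 + w, z.2.2.2 + v * z.2.2.1 / 2 - w * z.2.1 / 2) := by
  ext <;> simp [Gmul]
  ring

theorem Gmul_center (c : ℂ) (z : ℂ × ℂ × ℂ × ℂ) :
    Gmul (0, 0, 0, c) z = (z.1, z.2.1, z.2.2.1, z.2.2.2 + c) := by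
  simp [Gmul]

def fundamentalCell (P : Matrix (Fin 2) (Fin 2) ℝ) (lam μ : ℝ) : Set (ℂ × ℂ × ℂ × ℂ) :=
  (fun p : ℂ × (Fin 2 → ℂ) × ℂ => (p.1, p.2.1 0, p.2.1 1, p.2.2)) ''
    latticeCell lam μ ×ˢ mulVecCell (P.map Complex.ofReal) ×ˢ latticeCell (P.det / 2) (P.det / 2)

theorem isCompact_fundamentalCell : IsCompact (fundamentalCell P lam μ) :=
  ((isCompact_latticeCell _ _).prod
    ((isCompact_mulVecCell _).prod (isCompact_latticeCell _ _))).image (by fun_prop)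

theorem exists_Gmul_mem_fundamentalCell (hlam : lam ≠ 0) (hμ : μ ≠ 0) (hP : IsUnit P.det)
    (z : ℂ × ℂ × ℂ × ℂ) : ∃ γ₁ ∈ Gamma P lam μ, ∃ γ₂ ∈ Gamma P lam μ, ∃ γ₃ ∈ Gamma P lam μ,
      Gmul γ₃ (Gmul γ₂ (Gmul γ₁ z)) ∈ fundamentalCell P lam μ := by
  obtain ⟨a, b, hab⟩ := exists_add_latticePoint_mem_latticeCell hlam hμ z.1
  set z₁ := Gmul (latticePoint lam μ a b, 0, 0, 0) z
  obtain ⟨m₁, m₂, hm⟩ :=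
    exists_add_mulVec_gaussVec_mem_mulVecCell (isUnit_det_map_ofReal hP) ![z₁.2.1, z₁.2.2.1]
  set v := P.map Complex.ofReal *ᵥ gaussVec m₁ m₂
  set z₂ := Gmul (0, v 0, v 1, 0) z₁
  obtain ⟨h, k, hhk⟩ := exists_add_latticePoint_mem_latticeCell
    (div_ne_zero hP.ne_zero two_ne_zero) (div_ne_zero hP.ne_zero two_ne_zero) z₂.2.2.2
  have hγ₁ : (latticePoint lam μ a b, (0 : ℂ), (0 : ℂ), (0 : ℂ)) ∈ Gamma P lam μ :=
    mem_Gamma_iff_s5.2 ⟨⟨a, b, rfl⟩, ⟨0, 0, by simp [gaussVec]⟩, 0, 0, by simp [latticePoint]⟩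
  have hγ₂ : ((0 : ℂ), v 0, v 1, (0 : ℂ)) ∈ Gamma P lam μ :=
    mem_Gamma_iff_s5.2 ⟨⟨0, 0, by simp [latticePoint]⟩, ⟨m₁, m₂, by ext j; fin_cases j <;> rfl⟩, 0, 0,
      by simp [latticePoint]⟩
  have hγ₃ :
      ((0 : ℂ), (0 : ℂ), (0 : ℂ), latticePoint (P.det / 2) (P.det / 2) h k) ∈ Gamma P lam μ :=
    mem_Gamma_iff_s5.2 ⟨⟨0, 0, by simp [latticePoint]⟩, ⟨0, 0, by simp [gaussVec]⟩, h, k, rfl⟩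
  refine ⟨_, hγ₁, _, hγ₂, _, hγ₃, ?_⟩
  rw [Gmul_center]
  have h₁ : z₂.1 ∈ latticeCell lam μ := by simpa [z₂, z₁, Gmul] using hab
  have h₂₃ : ![z₂.2.1, z₂.2.2.1] = ![z₁.2.1, z₁.2.2.1] + v := by
    ext j; fin_cases j <;> simp [z₂, Gmul_zero_mk_zero]
  exact ⟨(z₂.1, ![z₂.2.1, z₂.2.2.1], z₂.2.2.2 + _), ⟨h₁, h₂₃ ▸ hm, hhk⟩, rfl⟩

theorem compactSpace_quot_leftOrbitRel (hlam : lam ≠ 0) (hP : IsUnit P.det) :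
    CompactSpace (Quot (leftOrbitRel P lam)) := by
  refine Quot.compactSpace_of_forall_exists_mem (K := fundamentalCell P lam Real.pi)
    isCompact_fundamentalCell fun z => ?_
  obtain ⟨γ₁, hγ₁, γ₂, hγ₂, γ₃, hγ₃, hz⟩ :=
    exists_Gmul_mem_fundamentalCell hlam Real.pi_ne_zero hP z
  refine ⟨_, hz, ?_⟩
  exact (Quot.sound ⟨γ₁, hγ₁, rfl⟩).trans <|
    (Quot.sound ⟨γ₂, hγ₂, rfl⟩).trans (Quot.sound ⟨γ₃, hγ₃, rfl⟩)

end Gamma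

end

theorem stmt5_general
    (lam : ℝ) (hlam : 0 < lam)
    (P : Matrix (Fin 2) (Fin 2) ℝ) (hP : IsUnit P.det) :
    CompactSpace (Quot (leftOrbitRel P lam)) ∧
    DiscreteTopology ↥(Gamma P lam Real.pi) :=
  ⟨compactSpace_quot_leftOrbitRel hlam.ne' hP, discreteTopology_Gamma hlam.ne' Real.pi_ne_zero hP⟩

/-- the coset space `Γ_π\G` (quotient of `G = (ℂ⁴,*)` by left multiplication by
`Γ_π`, with the quotient topology) is compact.  Together with discreteness of `Γ_π`, this says
that `Γ_π` is a lattice (a discrete cocompact subgroup) of `G`. -/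
theorem stmt5 (A : Matrix (Fin 2) (Fin 2) ℤ) (hA : A.det = 1)
    (lam : ℝ) (hlam : 0 < lam)
    (P : Matrix (Fin 2) (Fin 2) ℝ) (hP : IsUnit P.det)
    (hconj : P * A.map (Int.cast : ℤ → ℝ) * P⁻¹ =
      Matrix.diagonal ![Real.exp (-lam), Real.exp lam]) :
    CompactSpace (Quot (leftOrbitRel P lam)) ∧
    DiscreteTopology ↥(Gamma P lam Real.pi) :=
  stmt5_general lam hlam P hP
end

section
/- The map χ : ℂ⁴ → ℂ defined by χ(z₁,z₂,z₃,z₄) := e^{z₁ - conj(z₁)} satisfies: χ(y * z) = χ(y)·χ(z) for all y, z (so χ is a group homomorphism from G = (ℂ⁴,*) to the multiplicative group of nonzero complex numbers), and |χ(z)| = 1 for all z. Moreover χ(γ) = 1 for every γ ∈ Γ_π, while there exists γ ∈ Γ_{π/2} with χ(γ) = -1; in particular χ is identically 1 on Γ_π but not identically 1 on Γ_{π/2}. -/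
/-- The character `χ(z₁,z₂,z₃,z₄) := e^{z₁ - conj(z₁)}`. -/
noncomputable def chi (z : ℂ × ℂ × ℂ × ℂ) : ℂ :=
  Complex.exp (z.1 - (starRingEnd ℂ) z.1)

/-!
`χ(z) = e^{2i Im z₁}` sees only the first coordinate, which is additive under `*`, so `χ` is a
unitary character. On `Γ_μ` the imaginary part of `z₁` lies in `μℤ`, so `χ` takes the values
`e^{2iμb}`, `b ∈ ℤ`: all equal to `1` for `μ = π`, while `b = 1` gives `e^{iπ} = -1` for `μ = π/2`.
-/

open Complex hiding Gamma

lemma chi_eq_exp_im (z : ℂ × ℂ × ℂ × ℂ) : chi z = exp ((2 * z.1.im : ℝ) * I) := by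
  rw [chi, sub_conj]

lemma chi_Gmul (y z : ℂ × ℂ × ℂ × ℂ) : chi (Gmul y z) = chi y * chi z := by
  simp only [chi_eq_exp_im, Gmul, add_im, ← exp_add]
  push_cast
  ring_nf

lemma norm_chi (z : ℂ × ℂ × ℂ × ℂ) : ‖chi z‖ = 1 := by
  rw [chi_eq_exp_im, norm_exp_ofReal_mul_I]

lemma exists_int_chi_eq_of_mem_Gamma {P : Matrix (Fin 2) (Fin 2) ℝ} {lam μ : ℝ}
    {γ : ℂ × ℂ × ℂ × ℂ} (hγ : γ ∈ Gamma P lam μ) :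
    ∃ b : ℤ, chi γ = exp ((2 * μ * b : ℝ) * I) := by
  obtain ⟨a, b, h, k, m₁, m₂, rfl⟩ := hγ
  refine ⟨b, ?_⟩
  rw [chi_eq_exp_im]
  simp [mul_assoc]

lemma chi_eq_one_of_mem_Gamma_pi {P : Matrix (Fin 2) (Fin 2) ℝ} {lam : ℝ}
    {γ : ℂ × ℂ × ℂ × ℂ} (hγ : γ ∈ Gamma P lam Real.pi) : chi γ = 1 := by
  obtain ⟨b, hb⟩ := exists_int_chi_eq_of_mem_Gamma hγ
  rw [hb, ← exp_int_mul_two_pi_mul_I b]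
  push_cast
  ring_nf

lemma mul_I_mem_Gamma (P : Matrix (Fin 2) (Fin 2) ℝ) (lam μ : ℝ) :
    ((μ : ℂ) * I, 0, 0, 0) ∈ Gamma P lam μ :=
  ⟨0, 1, 0, 0, 0, 0, by simp⟩

lemma chi_mul_I (μ : ℝ) : chi ((μ : ℂ) * I, 0, 0, 0) = exp ((2 * μ : ℝ) * I) := by
  simp [chi_eq_exp_im]

theorem stmt7_general
    (lam : ℝ)
    (P : Matrix (Fin 2) (Fin 2) ℝ) :
    (∀ y z : ℂ × ℂ × ℂ × ℂ, chi (Gmul y z) = chi y * chi z) ∧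
    (∀ z : ℂ × ℂ × ℂ × ℂ, chi z ≠ 0) ∧
    (∀ z : ℂ × ℂ × ℂ × ℂ, ‖chi z‖ = 1) ∧
    (∀ γ ∈ Gamma P lam Real.pi, chi γ = 1) ∧
    (∃ γ ∈ Gamma P lam (Real.pi / 2), chi γ = -1) := by
  refine ⟨chi_Gmul, fun z => exp_ne_zero _, norm_chi, fun γ => chi_eq_one_of_mem_Gamma_pi,
    _, mul_I_mem_Gamma P lam (Real.pi / 2), ?_⟩
  rw [chi_mul_I, mul_div_cancel₀ Real.pi two_ne_zero, exp_pi_mul_I]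

/-- `χ` is a homomorphism from `G = (ℂ⁴,*)` to `ℂ*` of modulus one; it is
identically `1` on `Γ_π`, while some `γ ∈ Γ_{π/2}` has `χ(γ) = -1`. -/
theorem stmt7 (A : Matrix (Fin 2) (Fin 2) ℤ) (hA : A.det = 1)
    (lam : ℝ) (hlam : 0 < lam)
    (P : Matrix (Fin 2) (Fin 2) ℝ) (hP : IsUnit P.det)
    (hconj : P * A.map (Int.cast : ℤ → ℝ) * P⁻¹ =
      Matrix.diagonal ![Real.exp (-lam), Real.exp lam]) :
    (∀ y z : ℂ × ℂ × ℂ × ℂ, chi (Gmul y z) = chi y * chi z) ∧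
    (∀ z : ℂ × ℂ × ℂ × ℂ, chi z ≠ 0) ∧
    (∀ z : ℂ × ℂ × ℂ × ℂ, ‖chi z‖ = 1) ∧
    (∀ γ ∈ Gamma P lam Real.pi, chi γ = 1) ∧
    (∃ γ ∈ Gamma P lam (Real.pi / 2), chi γ = -1) :=
  stmt7_general lam P
end

section
/- There is a real Lie algebra structure on ℝ⁸ whose bracket satisfies, on the standard basis vectors e₁,…,e₈: [e₁,e₃] = -e₃, [e₁,e₄] = -e₄, [e₁,e₅] = e₅, [e₁,e₆] = e₆, [e₂,e₃] = -e₄, [e₂,e₄] = e₃, [e₂,e₅] = e₆, [e₂,e₆] = -e₅, [e₃,e₅] = e₇, [e₃,e₆] = e₈, [e₄,e₅] = e₈, [e₄,e₆] = -e₇, and all other basis brackets with i < j vanish (the bracket being determined by bilinearity and antisymmetry, and satisfying the Jacobi identity). Its derived series is g⁽¹⁾ = span(e₃,e₄,e₅,e₆,e₇,e₈), g⁽²⁾ = span(e₇,e₈), g⁽³⁾ = 0; hence this Lie algebra is 3-step solvable and is not nilpotent. -/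
set_option maxHeartbeats 1000000

section Aux
variable {α : Type*}
@[simp] lemma v8_0 (a b c d e f g h : α) : ![a,b,c,d,e,f,g,h] (0:Fin 8) = a := rfl
@[simp] lemma v8_1 (a b c d e f g h : α) : ![a,b,c,d,e,f,g,h] (1:Fin 8) = b := rfl
@[simp] lemma v8_2 (a b c d e f g h : α) : ![a,b,c,d,e,f,g,h] (2:Fin 8) = c := rfl
@[simp] lemma v8_3 (a b c d e f g h : α) : ![a,b,c,d,e,f,g,h] (3:Fin 8) = d := rfl
@[simp] lemma v8_4 (a b c d e f g h : α) : ![a,b,c,d,e,f,g,h] (4:Fin 8) = e := rfl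
@[simp] lemma v8_5 (a b c d e f g h : α) : ![a,b,c,d,e,f,g,h] (5:Fin 8) = f := rfl
@[simp] lemma v8_6 (a b c d e f g h : α) : ![a,b,c,d,e,f,g,h] (6:Fin 8) = g := rfl
@[simp] lemma v8_7 (a b c d e f g h : α) : ![a,b,c,d,e,f,g,h] (7:Fin 8) = h := rfl
end Aux

/-- The standard basis vector `eⱼ` of `ℝ⁸` (0-indexed: `E 0 = e₁`, ..., `E 7 = e₈`). -/
noncomputable def E (j : Fin 8) : Fin 8 → ℝ := Pi.single j 1

/-- The span of all brackets `br u v` with `u ∈ S`, `v ∈ T`. -/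
noncomputable def bracketSpan (br : (Fin 8 → ℝ) →ₗ[ℝ] (Fin 8 → ℝ) →ₗ[ℝ] (Fin 8 → ℝ))
    (S T : Submodule ℝ (Fin 8 → ℝ)) : Submodule ℝ (Fin 8 → ℝ) :=
  Submodule.span ℝ { x | ∃ u ∈ S, ∃ v ∈ T, x = br u v }

/-- The derived series `g⁽⁰⁾ = g`, `g⁽ᵏ⁺¹⁾ = [g⁽ᵏ⁾, g⁽ᵏ⁾]` of the bracket `br`. -/
noncomputable def derivedSeriesOf (br : (Fin 8 → ℝ) →ₗ[ℝ] (Fin 8 → ℝ) →ₗ[ℝ] (Fin 8 → ℝ)) :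
    ℕ → Submodule ℝ (Fin 8 → ℝ)
  | 0 => ⊤
  | k + 1 => bracketSpan br (derivedSeriesOf br k) (derivedSeriesOf br k)

/-- The lower central series `g, [g,g], [g,[g,g]], …` of the bracket `br`. -/
noncomputable def lowerCentralSeriesOf
    (br : (Fin 8 → ℝ) →ₗ[ℝ] (Fin 8 → ℝ) →ₗ[ℝ] (Fin 8 → ℝ)) :
    ℕ → Submodule ℝ (Fin 8 → ℝ)
  | 0 => ⊤
  | k + 1 => bracketSpan br ⊤ (lowerCentralSeriesOf br k)

/-- Underlying bilinear formula of the bracket. -/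
noncomputable def brf (x y : Fin 8 → ℝ) : Fin 8 → ℝ := ![0, 0,
     -(x 0 * y 2 - x 2 * y 0) + (x 1 * y 3 - x 3 * y 1),
     -(x 0 * y 3 - x 3 * y 0) - (x 1 * y 2 - x 2 * y 1),
     (x 0 * y 4 - x 4 * y 0) - (x 1 * y 5 - x 5 * y 1),
     (x 0 * y 5 - x 5 * y 0) + (x 1 * y 4 - x 4 * y 1),
     (x 2 * y 4 - x 4 * y 2) - (x 3 * y 5 - x 5 * y 3),
     (x 2 * y 5 - x 5 * y 2) + (x 3 * y 4 - x 4 * y 3)]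

noncomputable def br8 : (Fin 8 → ℝ) →ₗ[ℝ] (Fin 8 → ℝ) →ₗ[ℝ] (Fin 8 → ℝ) :=
  LinearMap.mk₂ ℝ brf
    (by intro x x' y; funext k; fin_cases k <;> simp [brf] <;> ring)
    (by intro c x y; funext k; fin_cases k <;> simp [brf] <;> ring)
    (by intro x y y'; funext k; fin_cases k <;> simp [brf] <;> ring)
    (by intro c x y; funext k; fin_cases k <;> simp [brf] <;> ring)

lemma br8_apply (x y : Fin 8 → ℝ) : br8 x y = brf x y := rfl

lemma hb02 : br8 (E 0) (E 2) = -E 2 := by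
  funext k; fin_cases k <;> simp [br8_apply, brf, E, Pi.single_apply]
lemma hb03 : br8 (E 0) (E 3) = -E 3 := by
  funext k; fin_cases k <;> simp [br8_apply, brf, E, Pi.single_apply]
lemma hb04 : br8 (E 0) (E 4) = E 4 := by
  funext k; fin_cases k <;> simp [br8_apply, brf, E, Pi.single_apply]
lemma hb05 : br8 (E 0) (E 5) = E 5 := by
  funext k; fin_cases k <;> simp [br8_apply, brf, E, Pi.single_apply]
lemma hb12 : br8 (E 1) (E 2) = -E 3 := by
  funext k; fin_cases k <;> simp [br8_apply, brf, E, Pi.single_apply]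
lemma hb13 : br8 (E 1) (E 3) = E 2 := by
  funext k; fin_cases k <;> simp [br8_apply, brf, E, Pi.single_apply]
lemma hb14 : br8 (E 1) (E 4) = E 5 := by
  funext k; fin_cases k <;> simp [br8_apply, brf, E, Pi.single_apply]
lemma hb15 : br8 (E 1) (E 5) = -E 4 := by
  funext k; fin_cases k <;> simp [br8_apply, brf, E, Pi.single_apply]
lemma hb24 : br8 (E 2) (E 4) = E 6 := by
  funext k; fin_cases k <;> simp [br8_apply, brf, E, Pi.single_apply]
lemma hb25 : br8 (E 2) (E 5) = E 7 := by
  funext k; fin_cases k <;> simp [br8_apply, brf, E, Pi.single_apply]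
lemma hb34 : br8 (E 3) (E 4) = E 7 := by
  funext k; fin_cases k <;> simp [br8_apply, brf, E, Pi.single_apply]
lemma hb35 : br8 (E 3) (E 5) = -E 6 := by
  funext k; fin_cases k <;> simp [br8_apply, brf, E, Pi.single_apply]

/-- Vectors whose first two coordinates vanish. -/
def K01 : Submodule ℝ (Fin 8 → ℝ) where
  carrier := {x | x 0 = 0 ∧ x 1 = 0}
  add_mem' := by rintro a b ⟨ha0, ha1⟩ ⟨hb0, hb1⟩; exact ⟨by simp [ha0, hb0], by simp [ha1, hb1]⟩
  zero_mem' := ⟨rfl, rfl⟩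
  smul_mem' := by rintro c x ⟨h0, h1⟩; exact ⟨by simp [h0], by simp [h1]⟩

/-- Vectors whose first six coordinates vanish. -/
def K05 : Submodule ℝ (Fin 8 → ℝ) where
  carrier := {x | x 0 = 0 ∧ x 1 = 0 ∧ x 2 = 0 ∧ x 3 = 0 ∧ x 4 = 0 ∧ x 5 = 0}
  add_mem' := by
    rintro a b ⟨a0, a1, a2, a3, a4, a5⟩ ⟨b0, b1, b2, b3, b4, b5⟩
    refine ⟨?_, ?_, ?_, ?_, ?_, ?_⟩ <;> simp [*]
  zero_mem' := ⟨rfl, rfl, rfl, rfl, rfl, rfl⟩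
  smul_mem' := by
    rintro c x ⟨h0, h1, h2, h3, h4, h5⟩
    refine ⟨?_, ?_, ?_, ?_, ?_, ?_⟩ <;> simp [*]

lemma mem_span6 (x : Fin 8 → ℝ) (h0 : x 0 = 0) (h1 : x 1 = 0) :
    x ∈ Submodule.span ℝ {E 2, E 3, E 4, E 5, E 6, E 7} := by
  have hx : x = x 2 • E 2 + x 3 • E 3 + x 4 • E 4 + x 5 • E 5 + x 6 • E 6 + x 7 • E 7 := by
    funext k; fin_cases k <;> simp [E, Pi.single_apply, h0, h1]
  rw [hx]
  refine add_mem (add_mem (add_mem (add_mem (add_mem ?_ ?_) ?_) ?_) ?_) ?_ <;>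
    exact Submodule.smul_mem _ _ (Submodule.subset_span (by simp))

lemma mem_span2 (x : Fin 8 → ℝ) (h0 : x 0 = 0) (h1 : x 1 = 0) (h2 : x 2 = 0)
    (h3 : x 3 = 0) (h4 : x 4 = 0) (h5 : x 5 = 0) :
    x ∈ Submodule.span ℝ {E 6, E 7} := by
  have hx : x = x 6 • E 6 + x 7 • E 7 := by
    funext k; fin_cases k <;> simp [E, Pi.single_apply, h0, h1, h2, h3, h4, h5]
  rw [hx]
  exact add_mem (Submodule.smul_mem _ _ (Submodule.subset_span (by simp)))
    (Submodule.smul_mem _ _ (Submodule.subset_span (by simp)))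

lemma span6_le : Submodule.span ℝ {E 2, E 3, E 4, E 5, E 6, E 7} ≤ K01 := by
  rw [Submodule.span_le]
  rintro x hx
  simp only [Set.mem_insert_iff, Set.mem_singleton_iff] at hx
  rcases hx with rfl | rfl | rfl | rfl | rfl | rfl <;>
    exact ⟨by simp [E, Pi.single_apply], by simp [E, Pi.single_apply]⟩

lemma span2_le : Submodule.span ℝ {E 6, E 7} ≤ K05 := by
  rw [Submodule.span_le]
  rintro x hx
  simp only [Set.mem_insert_iff, Set.mem_singleton_iff] at hx
  rcases hx with rfl | rfl <;>
    refine ⟨?_, ?_, ?_, ?_, ?_, ?_⟩ <;> simp [E, Pi.single_apply]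

lemma ds1 : derivedSeriesOf br8 1 = Submodule.span ℝ {E 2, E 3, E 4, E 5, E 6, E 7} := by
  show bracketSpan br8 ⊤ ⊤ = _
  refine le_antisymm ?_ ?_
  · rw [bracketSpan, Submodule.span_le]
    rintro x ⟨u, -, v, -, rfl⟩
    exact mem_span6 _ (by simp [br8_apply, brf]) (by simp [br8_apply, brf])
  · rw [Submodule.span_le]
    rintro x hx
    simp only [Set.mem_insert_iff, Set.mem_singleton_iff] at hx
    have mem : ∀ i j : Fin 8, br8 (E i) (E j) ∈ bracketSpan br8 ⊤ ⊤ := fun i j =>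
      Submodule.subset_span ⟨E i, trivial, E j, trivial, rfl⟩
    rcases hx with rfl | rfl | rfl | rfl | rfl | rfl
    · simpa [hb13] using mem 1 3
    · simpa [hb12] using neg_mem (mem 1 2)
    · simpa [hb04] using mem 0 4
    · simpa [hb05] using mem 0 5
    · simpa [hb24] using mem 2 4
    · simpa [hb25] using mem 2 5

lemma ds2 : derivedSeriesOf br8 2 = Submodule.span ℝ {E 6, E 7} := by
  have : derivedSeriesOf br8 2 =
      bracketSpan br8 (derivedSeriesOf br8 1) (derivedSeriesOf br8 1) := rfl
  rw [this, ds1]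
  refine le_antisymm ?_ ?_
  · rw [bracketSpan, Submodule.span_le]
    rintro x ⟨u, hu, v, hv, rfl⟩
    have hu' : u 0 = 0 ∧ u 1 = 0 := span6_le hu
    have hv' : v 0 = 0 ∧ v 1 = 0 := span6_le hv
    exact mem_span2 _ (by simp [br8_apply, brf]) (by simp [br8_apply, brf])
      (by simp [br8_apply, brf, hu'.1, hu'.2, hv'.1, hv'.2])
      (by simp [br8_apply, brf, hu'.1, hu'.2, hv'.1, hv'.2])
      (by simp [br8_apply, brf, hu'.1, hu'.2, hv'.1, hv'.2])
      (by simp [br8_apply, brf, hu'.1, hu'.2, hv'.1, hv'.2])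
  · rw [Submodule.span_le]
    rintro x hx
    simp only [Set.mem_insert_iff, Set.mem_singleton_iff] at hx
    have mem : ∀ i j : Fin 8, E i ∈ Submodule.span ℝ {E 2, E 3, E 4, E 5, E 6, E 7} →
        E j ∈ Submodule.span ℝ {E 2, E 3, E 4, E 5, E 6, E 7} →
        br8 (E i) (E j) ∈ bracketSpan br8 (Submodule.span ℝ {E 2, E 3, E 4, E 5, E 6, E 7})
          (Submodule.span ℝ {E 2, E 3, E 4, E 5, E 6, E 7}) := fun i j hi hj =>
      Submodule.subset_span ⟨E i, hi, E j, hj, rfl⟩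
    rcases hx with rfl | rfl
    · simpa [hb24] using mem 2 4 (Submodule.subset_span (by simp)) (Submodule.subset_span (by simp))
    · simpa [hb25] using mem 2 5 (Submodule.subset_span (by simp)) (Submodule.subset_span (by simp))

lemma E_ne_zero (j : Fin 8) : E j ≠ 0 := by
  intro h
  have := congrFun h j
  simp [E] at this

lemma ds2_ne_bot : derivedSeriesOf br8 2 ≠ ⊥ := by
  intro h
  have h6 : E 6 ∈ derivedSeriesOf br8 2 := by
    rw [ds2]; exact Submodule.subset_span (by simp)
  rw [h, Submodule.mem_bot] at h6
  exact E_ne_zero 6 h6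

lemma ds3 : derivedSeriesOf br8 3 = ⊥ := by
  have : derivedSeriesOf br8 3 =
      bracketSpan br8 (derivedSeriesOf br8 2) (derivedSeriesOf br8 2) := rfl
  rw [this, ds2, eq_bot_iff, bracketSpan, Submodule.span_le]
  rintro x ⟨u, hu, v, hv, rfl⟩
  have hu' := span2_le hu
  have hv' := span2_le hv
  obtain ⟨u0, u1, u2, u3, u4, u5⟩ := hu'
  obtain ⟨v0, v1, v2, v3, v4, v5⟩ := hv'
  simp only [SetLike.mem_coe, Submodule.mem_bot]
  funext k
  fin_cases k <;> simp [br8_apply, brf, u0, u1, u2, u3, u4, u5, v0, v1, v2, v3, v4, v5]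

lemma lcs_E4 : ∀ k, E 4 ∈ lowerCentralSeriesOf br8 k := by
  intro k
  induction k with
  | zero => exact Submodule.mem_top
  | succ k ih =>
    show E 4 ∈ bracketSpan br8 ⊤ (lowerCentralSeriesOf br8 k)
    exact Submodule.subset_span ⟨E 0, trivial, E 4, ih, hb04.symm⟩

/-- there is a real Lie algebra structure on `ℝ⁸` (an antisymmetric bilinear
bracket satisfying the Jacobi identity) with the listed basis brackets, all other basis
brackets (i < j) vanishing; its derived series is `g⁽¹⁾ = span(e₃,…,e₈)`,
`g⁽²⁾ = span(e₇,e₈)`, `g⁽³⁾ = 0`; hence it is 3-step solvable and not nilpotent. -/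
theorem stmt11 :
    ∃ br : (Fin 8 → ℝ) →ₗ[ℝ] (Fin 8 → ℝ) →ₗ[ℝ] (Fin 8 → ℝ),
      (∀ x, br x x = 0) ∧
      (∀ x y, br x y = -br y x) ∧
      (∀ x y z, br x (br y z) + br y (br z x) + br z (br x y) = 0) ∧
      br (E 0) (E 2) = -E 2 ∧ br (E 0) (E 3) = -E 3 ∧
      br (E 0) (E 4) = E 4 ∧ br (E 0) (E 5) = E 5 ∧
      br (E 1) (E 2) = -E 3 ∧ br (E 1) (E 3) = E 2 ∧
      br (E 1) (E 4) = E 5 ∧ br (E 1) (E 5) = -E 4 ∧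
      br (E 2) (E 4) = E 6 ∧ br (E 2) (E 5) = E 7 ∧
      br (E 3) (E 4) = E 7 ∧ br (E 3) (E 5) = -E 6 ∧
      (∀ i j : Fin 8, i < j →
        (i, j) ∉ ({(0, 2), (0, 3), (0, 4), (0, 5), (1, 2), (1, 3), (1, 4), (1, 5),
          (2, 4), (2, 5), (3, 4), (3, 5)} : Set (Fin 8 × Fin 8)) →
        br (E i) (E j) = 0) ∧
      derivedSeriesOf br 1 = Submodule.span ℝ {E 2, E 3, E 4, E 5, E 6, E 7} ∧
      derivedSeriesOf br 2 = Submodule.span ℝ {E 6, E 7} ∧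
      derivedSeriesOf br 2 ≠ ⊥ ∧
      derivedSeriesOf br 3 = ⊥ ∧
      (∃ k, derivedSeriesOf br k = ⊥) ∧
      (∀ k, lowerCentralSeriesOf br k ≠ ⊥) := by
  refine ⟨br8,
    fun x => by funext k; fin_cases k <;> simp [br8_apply, brf] <;> ring,
    fun x y => by funext k; fin_cases k <;> simp [br8_apply, brf] <;> ring,
    fun x y z => by funext k; fin_cases k <;> simp [br8_apply, brf] <;> ring,
    hb02, hb03, hb04, hb05, hb12, hb13, hb14, hb15, hb24, hb25, hb34, hb35,
    ?_, ds1, ds2, ds2_ne_bot, ds3, ⟨3, ds3⟩, ?_⟩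
  · intro i j hlt hns
    fin_cases i <;> fin_cases j <;>
      first
        | (exfalso; revert hlt; decide)
        | (funext k; (fin_cases k <;> simp [br8_apply, brf, E, Pi.single_apply]); done)
        | (exfalso; apply hns; simp [Prod.ext_iff, Fin.ext_iff])
  · intro k h
    have := lcs_E4 k
    rw [h, Submodule.mem_bot] at this
    exact E_ne_zero 4 this
end

section
/- Define, for z ∈ ℂ⁴, the ℂ-linear functionals on ℂ⁴: φ¹(z)(v) := v₁, φ²(z)(v) := e^{z₁}v₂, φ³(z)(v) := e^{-z₁}v₃, φ⁴(z)(v) := v₄ - (1/2)z₂v₃ + (1/2)z₃v₂. Then: (i) for every y ∈ ℂ⁴ the left translation L_y(z) := y * z is holomorphic with complex derivative at every point z given by D(L_y)(z)(v) = (v₁, e^{-y₁}v₂, e^{y₁}v₃, v₄ + (1/2)e^{y₁}y₂v₃ - (1/2)e^{-y₁}y₃v₂); (ii) each φʲ (j = 1,2,3,4) is left-invariant for G = (ℂ⁴,*), i.e. φʲ(y*z)(D(L_y)(z)(v)) = φʲ(z)(v) for all y, z, v ∈ ℂ⁴; and (iii) for every z ∈ ℂ⁴ the functionals φ¹(z),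 φ²(z), φ³(z), φ⁴(z) form a basis of the dual space of ℂ⁴. -/
/-- The coordinate projection `v ↦ v₁`. -/
noncomputable def pr1 : (ℂ × ℂ × ℂ × ℂ) →ₗ[ℂ] ℂ := LinearMap.fst ℂ ℂ (ℂ × ℂ × ℂ)

/-- The coordinate projection `v ↦ v₂`. -/
noncomputable def pr2 : (ℂ × ℂ × ℂ × ℂ) →ₗ[ℂ] ℂ :=
  (LinearMap.fst ℂ ℂ (ℂ × ℂ)).comp (LinearMap.snd ℂ ℂ (ℂ × ℂ × ℂ))

/-- The coordinate projection `v ↦ v₃`. -/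
noncomputable def pr3 : (ℂ × ℂ × ℂ × ℂ) →ₗ[ℂ] ℂ :=
  ((LinearMap.fst ℂ ℂ ℂ).comp (LinearMap.snd ℂ ℂ (ℂ × ℂ))).comp
    (LinearMap.snd ℂ ℂ (ℂ × ℂ × ℂ))

/-- The coordinate projection `v ↦ v₄`. -/
noncomputable def pr4 : (ℂ × ℂ × ℂ × ℂ) →ₗ[ℂ] ℂ :=
  ((LinearMap.snd ℂ ℂ ℂ).comp (LinearMap.snd ℂ ℂ (ℂ × ℂ))).comp
    (LinearMap.snd ℂ ℂ (ℂ × ℂ × ℂ))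

/-- `φ¹(z)(v) := v₁`. -/
noncomputable def phi1 (_ : ℂ × ℂ × ℂ × ℂ) : (ℂ × ℂ × ℂ × ℂ) →ₗ[ℂ] ℂ := pr1

/-- `φ²(z)(v) := e^{z₁} v₂`. -/
noncomputable def phi2 (z : ℂ × ℂ × ℂ × ℂ) : (ℂ × ℂ × ℂ × ℂ) →ₗ[ℂ] ℂ :=
  Complex.exp z.1 • pr2

/-- `φ³(z)(v) := e^{-z₁} v₃`. -/
noncomputable def phi3 (z : ℂ × ℂ × ℂ × ℂ) : (ℂ × ℂ × ℂ × ℂ) →ₗ[ℂ] ℂ :=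
  Complex.exp (-z.1) • pr3

/-- `φ⁴(z)(v) := v₄ - (1/2) z₂ v₃ + (1/2) z₃ v₂`. -/
noncomputable def phi4 (z : ℂ × ℂ × ℂ × ℂ) : (ℂ × ℂ × ℂ × ℂ) →ₗ[ℂ] ℂ :=
  pr4 - ((1 / 2) * z.2.1) • pr3 + ((1 / 2) * z.2.2.1) • pr2


noncomputable def Lclm (y : ℂ × ℂ × ℂ × ℂ) : (ℂ × ℂ × ℂ × ℂ) →L[ℂ] (ℂ × ℂ × ℂ × ℂ) :=
  LinearMap.toContinuousLinearMap
    { toFun := fun v => (v.1, Complex.exp (-y.1) * v.2.1, Complex.exp y.1 * v.2.2.1,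
        v.2.2.2 + (1 / 2) * Complex.exp y.1 * y.2.1 * v.2.2.1
          - (1 / 2) * Complex.exp (-y.1) * y.2.2.1 * v.2.1)
      map_add' := by intro a b; ext <;> simp <;> ring
      map_smul' := by intro c a; ext <;> simp <;> ring }

lemma Gmul_eq (y : ℂ × ℂ × ℂ × ℂ) : Gmul y = fun z => Lclm y z + y := by
  funext z
  ext <;> simp [Gmul, Lclm, LinearMap.toContinuousLinearMap] <;> ring

lemma hasFDerivGmul (y z : ℂ × ℂ × ℂ × ℂ) : HasFDerivAt (Gmul y) (Lclm y) z := by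
  rw [Gmul_eq]
  exact ((Lclm y).hasFDerivAt).add_const y

lemma fderivGmul_apply (y z v : ℂ × ℂ × ℂ × ℂ) :
    fderiv ℂ (Gmul y) z v =
      (v.1, Complex.exp (-y.1) * v.2.1, Complex.exp y.1 * v.2.2.1,
       v.2.2.2 + (1 / 2) * Complex.exp y.1 * y.2.1 * v.2.2.1
         - (1 / 2) * Complex.exp (-y.1) * y.2.2.1 * v.2.1) := by
  rw [(hasFDerivGmul y z).fderiv]
  rfl

lemma decompose (f : (ℂ × ℂ × ℂ × ℂ) →ₗ[ℂ] ℂ) :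
    f = f (1,0,0,0) • pr1 + f (0,1,0,0) • pr2 + f (0,0,1,0) • pr3 + f (0,0,0,1) • pr4 := by
  apply LinearMap.ext
  rintro ⟨a, b, c, d⟩
  have hv : ((a, b, c, d) : ℂ × ℂ × ℂ × ℂ)
      = a • ((1:ℂ),(0:ℂ),(0:ℂ),(0:ℂ)) + b • (0,1,0,0) + c • (0,0,1,0) + d • (0,0,0,1) := by
    simp [Prod.ext_iff]
  rw [hv, map_add, map_add, map_add, map_smul, map_smul, map_smul, map_smul]
  simp [pr1, pr2, pr3, pr4]
  ring

/-- (i) each left translation `L_y = Gmul y` is holomorphic with derivative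
`D(L_y)(z)(v) = (v₁, e^{-y₁}v₂, e^{y₁}v₃, v₄ + (1/2)e^{y₁}y₂v₃ - (1/2)e^{-y₁}y₃v₂)`;
(ii) each `φʲ` is left-invariant: `φʲ(y*z)(D(L_y)(z)(v)) = φʲ(z)(v)`;
(iii) for every `z`, the functionals `φ¹(z), …, φ⁴(z)` form a basis of the dual of `ℂ⁴`. -/
theorem stmt13 :
    (∀ y : ℂ × ℂ × ℂ × ℂ, Differentiable ℂ (Gmul y)) ∧
    (∀ y z v : ℂ × ℂ × ℂ × ℂ,
      fderiv ℂ (Gmul y) z v =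
        (v.1, Complex.exp (-y.1) * v.2.1, Complex.exp y.1 * v.2.2.1,
         v.2.2.2 + (1 / 2) * Complex.exp y.1 * y.2.1 * v.2.2.1
           - (1 / 2) * Complex.exp (-y.1) * y.2.2.1 * v.2.1)) ∧
    (∀ y z v : ℂ × ℂ × ℂ × ℂ,
      phi1 (Gmul y z) (fderiv ℂ (Gmul y) z v) = phi1 z v ∧
      phi2 (Gmul y z) (fderiv ℂ (Gmul y) z v) = phi2 z v ∧
      phi3 (Gmul y z) (fderiv ℂ (Gmul y) z v) = phi3 z v ∧
      phi4 (Gmul y z) (fderiv ℂ (Gmul y) z v) = phi4 z v) ∧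
    (∀ z : ℂ × ℂ × ℂ × ℂ,
      LinearIndependent ℂ ![phi1 z, phi2 z, phi3 z, phi4 z] ∧
      Submodule.span ℂ {phi1 z, phi2 z, phi3 z, phi4 z} = ⊤) := by
  have hdiff : ∀ y z : ℂ × ℂ × ℂ × ℂ, DifferentiableAt ℂ (Gmul y) z :=
    fun y z => (hasFDerivGmul y z).differentiableAt
  refine ⟨fun y z => hdiff y z, fderivGmul_apply, ?_, ?_⟩
  · intro y z v
    have key : Complex.exp (-y.1) * Complex.exp y.1 = 1 := by
      rw [← Complex.exp_add]; simp
    refine ⟨?_, ?_, ?_, ?_⟩ <;>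
      simp only [fderivGmul_apply, Gmul, phi1, phi2, phi3, phi4, pr1, pr2, pr3, pr4,
        Complex.exp_add, neg_add, LinearMap.smul_apply, LinearMap.add_apply,
        LinearMap.sub_apply, LinearMap.coe_comp, Function.comp_apply, LinearMap.fst_apply,
        LinearMap.snd_apply, smul_eq_mul]
    · linear_combination Complex.exp z.1 * v.2.1 * key
    · linear_combination Complex.exp (-z.1) * v.2.2.1 * key
    · linear_combination ((1/2 : ℂ) * z.2.2.1 * v.2.1 - (1/2 : ℂ) * z.2.1 * v.2.2.1) * key
  · intro z
    constructor
    · rw [Fintype.linearIndependent_iff]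
      intro g hg
      have hg' : g 0 • phi1 z + g 1 • phi2 z + g 2 • phi3 z + g 3 • phi4 z = 0 := by
        simpa [Fin.sum_univ_four] using hg
      have h1 := LinearMap.congr_fun hg' ((1:ℂ),0,0,0)
      have h2 := LinearMap.congr_fun hg' ((0:ℂ),1,0,0)
      have h3 := LinearMap.congr_fun hg' ((0:ℂ),0,1,0)
      have h4 := LinearMap.congr_fun hg' ((0:ℂ),0,0,1)
      simp [phi1, phi2, phi3, phi4, pr1, pr2, pr3, pr4] at h1 h2 h3 h4
      rw [h4] at h2 h3
      simp [Complex.exp_ne_zero] at h2 h3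
      intro i
      fin_cases i <;> simp [h1, h2, h3, h4]
    · rw [eq_top_iff]
      intro f _
      have hpr1 : pr1 ∈ Submodule.span ℂ {phi1 z, phi2 z, phi3 z, phi4 z} :=
        Submodule.subset_span (by simp [phi1])
      have hpr2 : pr2 ∈ Submodule.span ℂ {phi1 z, phi2 z, phi3 z, phi4 z} := by
        have : pr2 = Complex.exp (-z.1) • phi2 z := by
          rw [phi2, smul_smul, ← Complex.exp_add]
          simp
        rw [this]
        exact Submodule.smul_mem _ _ (Submodule.subset_span (by simp))
      have hpr3 : pr3 ∈ Submodule.span ℂ {phi1 z, phi2 z, phi3 z, phi4 z} := by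
        have : pr3 = Complex.exp z.1 • phi3 z := by
          rw [phi3, smul_smul, ← Complex.exp_add]
          simp
        rw [this]
        exact Submodule.smul_mem _ _ (Submodule.subset_span (by simp))
      have hpr4 : pr4 ∈ Submodule.span ℂ {phi1 z, phi2 z, phi3 z, phi4 z} := by
        have : pr4 = phi4 z + ((1 / 2) * z.2.1) • pr3 - ((1 / 2) * z.2.2.1) • pr2 := by
          rw [phi4]; abel
        rw [this]
        exact sub_mem (add_mem (Submodule.subset_span (by simp)) (Submodule.smul_mem _ _ hpr3))
          (Submodule.smul_mem _ _ hpr2)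
      rw [decompose f]
      exact add_mem (add_mem (add_mem (Submodule.smul_mem _ _ hpr1) (Submodule.smul_mem _ _ hpr2))
        (Submodule.smul_mem _ _ hpr3)) (Submodule.smul_mem _ _ hpr4)
end
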